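/- arXiv:1410.7964 — 3 statements merged into one kernel-verified Lean document; each statement's English description precedes it below -/
import Mathlib

section
/- For a q-regular connected multigraph G without loops on m vertices, where q ≥ 3 is odd and m ≥ 3, the matching number M(G) satisfies M(G) ≥ ⌈((q²−q−1)m−(q−1))/(q(3q−5))⌉. -/
/-- A multigraph on vertex set `Fin m` is modeled by the multiset of its edges,
each edge being an unordered pair of vertices (parallel edges = multiplicity). -/
def Multigraph.degree {m : ℕ} (E : Multiset (Sym2 (Fin m))) (v : Fin m) : ℕ :=
  Multiset.countP (fun e => v ∈ e) E

/-- No loops: no edge is a diagonal pair. -/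
def Multigraph.Loopless {m : ℕ} (E : Multiset (Sym2 (Fin m))) : Prop :=
  ∀ e ∈ E, ¬ e.IsDiag

/-- Adjacency relation induced by the edge multiset. -/
def Multigraph.Adj {m : ℕ} (E : Multiset (Sym2 (Fin m))) (u v : Fin m) : Prop :=
  ∃ e ∈ E, u ∈ e ∧ v ∈ e ∧ u ≠ v

/-- Connectedness: any two vertices are joined by a path. -/
def Multigraph.Connected {m : ℕ} (E : Multiset (Sym2 (Fin m))) : Prop :=
  ∀ u v : Fin m, Relation.ReflTransGen (Multigraph.Adj E) u v

/-- A matching: a set of edges of the multigraph which are pairwise non-adjacent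
(no two distinct edges of the matching share a vertex). -/
def Multigraph.IsMatching {m : ℕ} (E : Multiset (Sym2 (Fin m)))
    (M : Finset (Sym2 (Fin m))) : Prop :=
  (∀ e ∈ M, e ∈ E) ∧ ∀ e ∈ M, ∀ f ∈ M, e ≠ f → ∀ v : Fin m, ¬ (v ∈ e ∧ v ∈ f)

/-!
The bound comes from the Tutte–Berge formula: some vertex set `S` satisfies
`m + |S| ≤ 2 M(G) + o(G - S)`, where `o` counts odd components. It follows from Tutte's
theorem applied to `G` joined with a complete graph on `d` new vertices, `d` being the maximal
deficiency `o(G - u) - |u|`.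

For a component `C` of `G - S` with `∂C` edges to `S`, degree counting gives
`q|C| = 2e(C) + ∂C`, so `∂C` is odd when `|C|` is, and `∂C = q` when `|C| = 1`. Hence
`q(3q-5)[|C| odd] ≤ (q-1)(q-2)|C| + 2(q-2)∂C + 2(q-1)`. Summing over the `k` components, with
`∑ ∂C ≤ ∂S = q|S| - 2e(S)` and `|S| + k ≤ e(S) + ∂S + 1` (contracting every component to a
vertex leaves a connected graph), gives
`q(3q-5) o(G - S) ≤ (q-1)(q-2)m + q(3q-5)|S| + 2(q-1)`, which together with the Tutte–Berge
inequality is the claim.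
-/

open Finset Function

namespace SimpleGraph

variable {V W : Type*} {G : SimpleGraph V}

noncomputable abbrev numOddComponentsDeleteVerts (G : SimpleGraph V) (u : Set V) : ℕ :=
  ((⊤ : G.Subgraph).deleteVerts u).coe.oddComponents.ncard

lemma Iso.ncard_oddComponents {V' : Type*} {G' : SimpleGraph V'} (φ : G ≃g G') :
    G'.oddComponents.ncard = G.oddComponents.ncard := by
  have hsupp (c : G.ConnectedComponent) :
      (φ.connectedComponentEquiv c).supp.ncard = c.supp.ncard := by
    simpa only [Nat.card_coe_set_eq] using (Nat.card_congr (c.isoEquivSupp φ)).symm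
  rw [← Set.ncard_image_of_injective _ φ.connectedComponentEquiv.injective]
  congr 1
  ext c'
  obtain ⟨c, rfl⟩ := φ.connectedComponentEquiv.surjective c'
  rw [φ.connectedComponentEquiv.injective.mem_set_image]
  exact (congrArg Odd (hsupp c)).to_iff

lemma odd_numOddComponentsDeleteVerts_add_ncard_iff [Finite V] (u : Set V) :
    Odd (G.numOddComponentsDeleteVerts u + u.ncard) ↔ Odd (Nat.card V) := by
  have hcard : Nat.card ((⊤ : G.Subgraph).deleteVerts u).verts + u.ncard = Nat.card V := by
    rw [Subgraph.deleteVerts_verts, Subgraph.verts_top, Nat.card_coe_set_eq,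
      ← Set.compl_eq_univ_sdiff, add_comm, Set.ncard_add_ncard_compl]
  rw [← hcard, Nat.odd_add, Nat.odd_add, odd_ncard_oddComponents]

def joinTop (G : SimpleGraph V) (W : Type*) : SimpleGraph (V ⊕ W) :=
  fromRel fun
    | .inl a, .inl b => G.Adj a b
    | _, _ => True

@[simp] lemma joinTop_adj_inl_inl {a b : V} :
    (G.joinTop W).Adj (.inl a) (.inl b) ↔ G.Adj a b := by
  simp only [joinTop, fromRel_adj, ne_eq, Sum.inl.injEq, G.adj_comm b a, or_self]
  exact and_iff_right_of_imp G.ne_of_adj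

lemma joinTop_adj_inr {i : W} {x : V ⊕ W} (hx : x ≠ .inr i) : (G.joinTop W).Adj (.inr i) x := by
  simp [joinTop, Ne.symm hx]

lemma ncard_preimage_inl_add_card [Finite V] [Finite W] {u : Set (V ⊕ W)}
    (hu : Set.range Sum.inr ⊆ u) : (Sum.inl ⁻¹' u).ncard + Nat.card W = u.ncard := by
  have hsplit : u = Sum.inl '' (Sum.inl ⁻¹' u) ∪ Set.range Sum.inr := by
    ext (a | i) <;> simp [hu ⟨_, rfl⟩]
  conv_rhs => rw [hsplit]
  rw [Set.ncard_union_eq, Set.ncard_image_of_injective _ Sum.inl_injective,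
    Set.ncard_range_of_injective Sum.inr_injective]
  exact Set.disjoint_left.mpr fun _ ⟨_, _, ha⟩ ⟨_, hi⟩ => Sum.inl_ne_inr (ha.trans hi.symm)

noncomputable def deleteVertsJoinTopIso {u : Set (V ⊕ W)} (hu : Set.range Sum.inr ⊆ u) :
    ((⊤ : G.Subgraph).deleteVerts (Sum.inl ⁻¹' u)).coe ≃g
      ((⊤ : (G.joinTop W).Subgraph).deleteVerts u).coe where
  toEquiv := Equiv.ofBijective (fun a => ⟨.inl a, by simpa using a.2⟩) <| by
    refine ⟨fun a b hab => by simpa [Subtype.ext_iff] using hab, fun ⟨x, hx⟩ => ?_⟩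
    cases x with
    | inl a => exact ⟨⟨a, by simpa using hx⟩, rfl⟩
    | inr i => exact absurd (hu ⟨i, rfl⟩) (by simpa using hx)
  map_rel_iff' := by simp [Equiv.ofBijective]

lemma joinTop_not_isTutteViolator [Finite V] [Finite W] (hpar : Even (Nat.card V + Nat.card W))
    (h : ∀ u : Set V, G.numOddComponentsDeleteVerts u ≤ u.ncard + Nat.card W)
    (u : Set (V ⊕ W)) : ¬ (G.joinTop W).IsTutteViolator u := by
  rw [IsTutteViolator, not_lt]
  by_cases hu : Set.range Sum.inr ⊆ u
  · rw [(deleteVertsJoinTopIso hu).ncard_oddComponents, ← ncard_preimage_inl_add_card hu]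
    exact h _
  obtain ⟨_, ⟨i, rfl⟩, hi⟩ := Set.not_subset.mp hu
  set H := ((⊤ : (G.joinTop W).Subgraph).deleteVerts u).coe
  have hpre : H.Preconnected := by
    let z : ((⊤ : (G.joinTop W).Subgraph).deleteVerts u).verts := ⟨.inr i, by simpa using hi⟩
    have hz (x) : H.Reachable z x := by
      by_cases hx : x = z
      · exact hx ▸ Reachable.refl _
      · refine Adj.reachable ?_
        simp only [H, Subgraph.coe_adj, Subgraph.deleteVerts_adj, Subgraph.verts_top,
          Subgraph.top_adj, Set.mem_univ, true_and]
        exact ⟨hi, x.2.2, joinTop_adj_inr fun h => hx (Subtype.ext h)⟩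
    exact fun x y => (hz x).symm.trans (hz y)
  have hle : H.oddComponents.ncard ≤ 1 :=
    haveI := hpre.subsingleton_connectedComponent
    Set.ncard_le_one_of_subsingleton _
  have hev : Even (H.oddComponents.ncard + u.ncard) := by
    rw [← Nat.not_odd_iff_even, odd_numOddComponentsDeleteVerts_add_ncard_iff, Nat.card_sum]
    exact Nat.not_odd_iff_even.mpr hpar
  by_contra hlt
  obtain ⟨k, hk⟩ := hev
  omega

lemma Subgraph.IsPerfectMatching.exists_isMatching_of_joinTop [Finite V] [Finite W]
    {M' : (G.joinTop W).Subgraph} (hM' : M'.IsPerfectMatching) :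
    ∃ M : G.Subgraph, M.IsMatching ∧ Nat.card V ≤ M.verts.ncard + Nat.card W := by
  let M : G.Subgraph :=
    { verts := {a | ∃ b, M'.Adj (.inl a) (.inl b)}
      Adj a b := M'.Adj (.inl a) (.inl b)
      adj_sub h := joinTop_adj_inl_inl.mp (M'.adj_sub h)
      edge_vert h := ⟨_, h⟩
      symm := ⟨fun _ _ h => M'.adj_symm h⟩ }
  have hmatch : M.IsMatching := fun a ⟨b, hab⟩ =>
    ⟨b, hab, fun c hac => Sum.inl_injective (hM'.1.eq_of_adj_left hac hab)⟩
  have hpartner (a : ↥M.vertsᶜ) : ∃ i, M'.Adj (.inl a.1) (.inr i) := by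
    obtain ⟨w, hw, -⟩ := Subgraph.isPerfectMatching_iff.mp hM' (.inl a.1)
    cases w with
    | inl b => exact absurd ⟨b, hw⟩ a.2
    | inr i => exact ⟨i, hw⟩
  choose f hf using hpartner
  have hinj : Injective f := fun a b hab =>
    Subtype.ext (Sum.inl_injective (hM'.1.eq_of_adj_right (hf a) (hab ▸ hf b)))
  refine ⟨M, hmatch, ?_⟩
  rw [← Set.ncard_add_ncard_compl M.verts]
  simpa [Nat.card_coe_set_eq] using Nat.card_le_card_of_injective f hinj

theorem exists_isMatching_of_forall_numOddComponentsDeleteVerts_le [Finite V] {d : ℕ}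
    (hpar : Even (Nat.card V + d))
    (h : ∀ u : Set V, G.numOddComponentsDeleteVerts u ≤ u.ncard + d) :
    ∃ M : G.Subgraph, M.IsMatching ∧ Nat.card V ≤ M.verts.ncard + d := by
  obtain ⟨M', hM'⟩ := (G.joinTop (Fin d)).tutte.mpr
    (joinTop_not_isTutteViolator (by simpa using hpar) (by simpa using h))
  simpa using hM'.exists_isMatching_of_joinTop

theorem tutte_berge [Finite V] (G : SimpleGraph V) :
    ∃ (M : G.Subgraph) (u : Set V), M.IsMatching ∧
      Nat.card V + u.ncard ≤ M.verts.ncard + G.numOddComponentsDeleteVerts u := by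
  obtain ⟨u, hu⟩ :=
    Finite.exists_max fun u : Set V => (G.numOddComponentsDeleteVerts u : ℤ) - u.ncard
  have hu₀ : u.ncard ≤ G.numOddComponentsDeleteVerts u := by
    have := hu ∅
    simp only [Set.ncard_empty, Nat.cast_zero, sub_zero] at this
    omega
  have hpar : Even (Nat.card V + (G.numOddComponentsDeleteVerts u - u.ncard)) := by
    have h := (odd_numOddComponentsDeleteVerts_add_ncard_iff (G := G) u).not
    rw [Nat.not_odd_iff_even, Nat.not_odd_iff_even] at h
    rw [Nat.even_add, ← h, Nat.even_add, Nat.even_sub hu₀]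
  obtain ⟨M, hM, hcard⟩ :=
    exists_isMatching_of_forall_numOddComponentsDeleteVerts_le (G := G) hpar fun v => by
      have := hu v
      omega
  exact ⟨M, u, hM, by omega⟩

lemma Subgraph.IsMatching.ncard_verts [Finite V] {M : G.Subgraph} (hM : M.IsMatching) :
    M.verts.ncard = 2 * M.edgeSet.ncard := by
  classical
  cases nonempty_fintype V
  have hdeg : ∀ v : M.verts, M.coe.degree v = 1 := fun v => by
    rw [Subgraph.coe_degree]
    convert (Subgraph.isMatching_iff_forall_degree.mp hM) v v.2
  have hcard : Fintype.card M.verts = 2 * #M.coe.edgeFinset := by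
    rw [← M.coe.sum_degrees_eq_twice_card_edges, Fintype.card, card_eq_sum_ones]
    exact sum_congr rfl fun v _ => by convert (hdeg v).symm
  rw [← Nat.card_coe_set_eq, Nat.card_eq_fintype_card, hcard, ← Subgraph.image_coe_edgeSet_coe,
    Set.ncard_image_of_injective _ (Sym2.map.injective Subtype.val_injective),
    ← Set.ncard_coe_finset, coe_edgeFinset]

lemma Preconnected.card_le_ncard_add_one_of_contract {Q : Type*} [Finite Q]
    (hG : G.Preconnected) {π : V → Q} (hπ : Surjective π)
    {F : Set (Sym2 V)} (hF : F.Finite)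
    (hGF : ∀ a b, G.Adj a b → π a ≠ π b → s(a, b) ∈ F) :
    Nat.card Q ≤ F.ncard + 1 := by
  rcases isEmpty_or_nonempty Q with hQ | hQ
  · simp
  let H : SimpleGraph Q := .fromEdgeSet (Sym2.map π '' F)
  have hH : H.Connected := by
    refine ⟨fun x y => ?_⟩
    obtain ⟨a, rfl⟩ := hπ x
    obtain ⟨b, rfl⟩ := hπ y
    rw [reachable_iff_reflTransGen]
    refine ((reachable_iff_reflTransGen _ _).mp (hG a b)).lift' π fun c d hcd => ?_
    by_cases h : π c = π d
    · simp only [onFun, h, Relation.ReflTransGen.refl]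
    · exact .single ⟨⟨_, hGF c d hcd h, rfl⟩, h⟩
  calc Nat.card Q ≤ Nat.card H.edgeSet + 1 := hH.card_vert_le_card_edgeSet_add_one
    _ ≤ (Sym2.map π '' F).ncard + 1 := by
      rw [Nat.card_coe_set_eq]
      gcongr
      · exact hF.image _
      · exact edgeSet_fromEdgeSet _ ▸ Set.sdiff_subset
    _ ≤ F.ncard + 1 := by gcongr; exact Set.ncard_image_le hF

namespace Subgraph

variable [Fintype V] {G' : G.Subgraph}

open Classical in
noncomputable def componentFinset (c : G'.coe.ConnectedComponent) : Finset V :=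
  {v | ∃ h : v ∈ G'.verts, G'.coe.connectedComponentMk ⟨v, h⟩ = c}

lemma coe_componentFinset (c : G'.coe.ConnectedComponent) :
    (componentFinset c : Set V) = Subtype.val '' c.supp := by
  ext v
  simp [componentFinset]

lemma card_componentFinset (c : G'.coe.ConnectedComponent) :
    #(componentFinset c) = c.supp.ncard := by
  rw [← Set.ncard_coe_finset, coe_componentFinset,
    Set.ncard_image_of_injective _ Subtype.val_injective]

lemma componentFinset_nonempty (c : G'.coe.ConnectedComponent) : (componentFinset c).Nonempty := by
  rw [← coe_nonempty, coe_componentFinset]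
  exact c.nonempty_supp.image _

lemma pairwise_disjoint_componentFinset : Pairwise (Disjoint on componentFinset (G' := G')) := by
  intro c d hcd
  rw [onFun, ← disjoint_coe, coe_componentFinset, coe_componentFinset]
  exact (Set.disjoint_image_iff Subtype.val_injective).mpr
    (pairwise_disjoint_supp_connectedComponent _ hcd)

lemma mem_verts_of_mem_componentFinset {c : G'.coe.ConnectedComponent} {v : V}
    (hv : v ∈ componentFinset c) : v ∈ G'.verts := by
  rw [← mem_coe, coe_componentFinset] at hv
  obtain ⟨w, -, rfl⟩ := hv
  exact w.2

lemma exists_mem_componentFinset {v : V} (hv : v ∈ G'.verts) :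
    ∃ c : G'.coe.ConnectedComponent, v ∈ componentFinset c :=
  ⟨G'.coe.connectedComponentMk ⟨v, hv⟩, by simp [componentFinset, hv]⟩

lemma mem_componentFinset_of_adj {c : G'.coe.ConnectedComponent} {v w : V}
    (hv : v ∈ componentFinset c) (hw : w ∈ G'.verts) (hadj : G'.Adj v w) :
    w ∈ componentFinset c := by
  rw [← mem_coe, coe_componentFinset] at hv ⊢
  exact ConnectedComponent.mem_coe_supp_of_adj hv hw hadj

end Subgraph

end SimpleGraph

-- The weights make both extremal odd parts tight: `k = 1` (where `b = q`) and `k = 3`, `b = 1`.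
lemma mul_ite_odd_le {q k i b : ℕ} (hq : 3 ≤ q) (hqodd : Odd q) (hk : q * k = 2 * i + b)
    (hk1 : k = 1 → i = 0) :
    (q * (3 * q - 5) : ℤ) * (if Odd k then 1 else 0) ≤
      (q - 1) * (q - 2) * k + 2 * (q - 2) * b + 2 * (q - 1) := by
  have hq' : (3 : ℤ) ≤ q := by exact_mod_cast hq
  split_ifs with hodd
  · have hb : Odd b := by
      have : Odd (q * k) := hqodd.mul hodd
      rw [hk] at this
      exact (Nat.odd_add'.mp this).mpr (even_two_mul i)
    obtain rfl | hk3 : k = 1 ∨ 3 ≤ k := by obtain ⟨r, rfl⟩ := hodd; omega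
    · have hbq : b = q := by have := hk1 rfl; omega
      subst hbq
      push_cast
      nlinarith
    · have hk3' : (3 : ℤ) ≤ k := by exact_mod_cast hk3
      have hb1 : (1 : ℤ) ≤ b := by obtain ⟨r, rfl⟩ := hb; push_cast; omega
      nlinarith [mul_nonneg (mul_nonneg (by linarith : (0 : ℤ) ≤ q - 1)
        (by linarith : (0 : ℤ) ≤ q - 2)) (by linarith : (0 : ℤ) ≤ k - 3)]
  · have : (0 : ℤ) ≤ (q - 1) * (q - 2) * k := by
      have : (0 : ℤ) ≤ k := by positivity
      have : (0 : ℤ) ≤ (q - 1) * (q - 2) := by nlinarith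
      positivity
    have : (0 : ℤ) ≤ b := by positivity
    nlinarith

lemma Multiset.countP_eq_sum_map {α : Type*} (p : α → Prop) [DecidablePred p]
    (s : Multiset α) :
    s.countP p = (s.map fun a => if p a then 1 else 0).sum := by
  induction s using Multiset.induction_on with
  | empty => simp
  | cons a s ih => simp [Multiset.countP_cons, ih, add_comm]

open SimpleGraph

namespace Multigraph

variable {V : Type*}

def toSimpleGraph (E : Multiset (Sym2 V)) : SimpleGraph V := SimpleGraph.fromEdgeSet {e | e ∈ E}

lemma toSimpleGraph_adj {E : Multiset (Sym2 V)} {a b : V} :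
    (toSimpleGraph E).Adj a b ↔ s(a, b) ∈ E ∧ a ≠ b := by
  simp [toSimpleGraph]

section Counting

variable [Fintype V] [DecidableEq V] (E : Multiset (Sym2 V))

def numInnerEdges (A : Finset V) : ℕ := E.countP fun e => ∀ v ∈ e, v ∈ A

def numBoundaryEdges (A : Finset V) : ℕ :=
  E.countP fun e => (∃ v ∈ e, v ∈ A) ∧ ∃ v ∈ e, v ∉ A

variable {E}

lemma sum_countP_mem_eq (hE : ∀ e ∈ E, ¬ e.IsDiag) (A : Finset V) :
    ∑ v ∈ A, E.countP (v ∈ ·) = 2 * numInnerEdges E A + numBoundaryEdges E A := by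
  simp only [numInnerEdges, numBoundaryEdges, Multiset.countP_eq_sum_map]
  rw [← Multiset.sum_map_sum, ← Multiset.sum_map_mul_left, ← Multiset.sum_map_add]
  refine congrArg Multiset.sum (Multiset.map_congr rfl fun e he => ?_)
  induction e using Sym2.ind with
  | _ a b =>
    have hab : a ≠ b := by simpa using hE _ he
    by_cases ha : a ∈ A <;> by_cases hb : b ∈ A <;>
      simp [Finset.filter_or, Finset.filter_eq', ha, hb, hab]

lemma countP_exists_mem_eq (A : Finset V) :
    E.countP (fun e => ∃ v ∈ e, v ∈ A) = numInnerEdges E A + numBoundaryEdges E A := by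
  simp only [numInnerEdges, numBoundaryEdges, Multiset.countP_eq_sum_map]
  rw [← Multiset.sum_map_add]
  refine congrArg Multiset.sum (Multiset.map_congr rfl fun e _ => ?_)
  induction e using Sym2.ind with
  | _ a b => by_cases ha : a ∈ A <;> by_cases hb : b ∈ A <;> simp [ha, hb]

section Parts

variable {ι : Type*} [Fintype ι] {S : Finset V} {K : ι → Finset V}

lemma sum_card_add_card (hdisj : Pairwise (Disjoint on K))
    (hcover : ∀ v, v ∉ S ↔ ∃ i, v ∈ K i) :
    ∑ i, #(K i) + #S = Fintype.card V := by
  rw [← card_biUnion fun i _ j _ hij => hdisj hij, ← card_compl_add_card S]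
  congr
  ext v
  simp [hcover]

lemma sum_numBoundaryEdges_le (hE : ∀ e ∈ E, ¬ e.IsDiag) (hdisj : Pairwise (Disjoint on K))
    (hcover : ∀ v, v ∉ S ↔ ∃ i, v ∈ K i)
    (hclosed : ∀ i, ∀ a ∈ K i, ∀ b, (toSimpleGraph E).Adj a b → b ∈ K i ∨ b ∈ S) :
    ∑ i, numBoundaryEdges E (K i) ≤ numBoundaryEdges E S := by
  simp only [numBoundaryEdges, Multiset.countP_eq_sum_map]
  rw [← Multiset.sum_map_sum]
  refine Multiset.sum_map_le_sum_map _ _ fun e he => ?_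
  induction e using Sym2.ind with
  | _ a b =>
    have hab : (toSimpleGraph E).Adj a b := toSimpleGraph_adj.mpr ⟨he, by simpa using hE _ he⟩
    have hleave (i) (h : (∃ v ∈ s(a, b), v ∈ K i) ∧ ∃ v ∈ s(a, b), v ∉ K i) :
        (a ∈ K i ∧ b ∈ S) ∨ (b ∈ K i ∧ a ∈ S) := by
      simp only [Sym2.mem_iff, exists_eq_or_imp, exists_eq_left] at h
      rcases h with ⟨ha | hb, ha' | hb'⟩
      · exact absurd ha ha'
      · exact .inl ⟨ha, (hclosed i a ha b hab).resolve_left hb'⟩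
      · exact .inr ⟨hb, (hclosed i b hb a hab.symm).resolve_left ha'⟩
      · exact absurd hb hb'
    have hKS {i v} (hv : v ∈ K i) : v ∉ S := (hcover v).mpr ⟨i, hv⟩
    rw [sum_boole, Nat.cast_id]
    split_ifs with hS
    · refine card_le_one.mpr fun i hi j hj => ?_
      simp only [mem_filter, mem_univ, true_and] at hi hj
      by_contra hij
      rcases hleave i hi with ⟨hai, hbS⟩ | ⟨hbi, haS⟩ <;>
        rcases hleave j hj with ⟨haj, hbS'⟩ | ⟨hbj, haS'⟩
      · exact disjoint_left.mp (hdisj hij) hai haj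
      · exact hKS hai haS'
      · exact hKS hbi hbS'
      · exact disjoint_left.mp (hdisj hij) hbi hbj
    · refine (card_eq_zero.mpr (filter_eq_empty_iff.mpr fun i _ hi => hS ?_)).le
      rcases hleave i hi with ⟨hai, hbS⟩ | ⟨hbi, haS⟩
      · exact ⟨⟨b, Sym2.mem_mk_right a b, hbS⟩, ⟨a, Sym2.mem_mk_left a b, hKS hai⟩⟩
      · exact ⟨⟨a, Sym2.mem_mk_left a b, haS⟩, ⟨b, Sym2.mem_mk_right a b, hKS hbi⟩⟩

lemma card_add_card_le_countP_add_one (hconn : (toSimpleGraph E).Preconnected)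
    (hdisj : Pairwise (Disjoint on K))
    (hcover : ∀ v, v ∉ S ↔ ∃ i, v ∈ K i) (hne : ∀ i, (K i).Nonempty)
    (hclosed : ∀ i, ∀ a ∈ K i, ∀ b, (toSimpleGraph E).Adj a b → b ∈ K i ∨ b ∈ S) :
    #S + Fintype.card ι ≤ E.countP (fun e => ∃ v ∈ e, v ∈ S) + 1 := by
  choose part hpart using fun v (hv : v ∉ S) => (hcover v).mp hv
  have hpart_eq {v i} (hv : v ∉ S) (hvi : v ∈ K i) : part v hv = i := by
    by_contra h
    exact disjoint_left.mp (hdisj h) (hpart v hv) hvi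
  let π (v : V) : S ⊕ ι := if hv : v ∈ S then .inl ⟨v, hv⟩ else .inr (part v hv)
  have hπ : Surjective π := by
    rintro (⟨v, hv⟩ | i)
    · exact ⟨v, by simp [π, hv]⟩
    · obtain ⟨v, hv⟩ := hne i
      have hvS := (hcover v).mpr ⟨i, hv⟩
      exact ⟨v, by simp [π, hvS, hpart_eq hvS hv]⟩
  let F : Finset (Sym2 V) := (E.filter fun e => ∃ v ∈ e, v ∈ S).toFinset
  have hF (a b) (hab : (toSimpleGraph E).Adj a b) (hπab : π a ≠ π b) :
      s(a, b) ∈ (F : Set (Sym2 V)) := by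
    simp only [F, mem_coe, Multiset.mem_toFinset, Multiset.mem_filter]
    refine ⟨(toSimpleGraph_adj.mp hab).1, ?_⟩
    by_contra! h
    have haS : a ∉ S := h a (Sym2.mem_mk_left a b)
    have hbS : b ∉ S := h b (Sym2.mem_mk_right a b)
    have hb := (hclosed _ a (hpart a haS) b hab).resolve_right hbS
    exact hπab (by simp [π, haS, hbS, hpart_eq hbS hb])
  have := hconn.card_le_ncard_add_one_of_contract hπ F.finite_toSet hF
  rw [Nat.card_sum, Nat.card_eq_fintype_card, Fintype.card_coe, Nat.card_eq_fintype_card,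
    Set.ncard_coe_finset] at this
  refine this.trans (Nat.add_le_add_right ?_ 1)
  rw [Multiset.countP_eq_card_filter]
  exact Multiset.toFinset_card_le _

theorem mul_card_odd_parts_le (hE : ∀ e ∈ E, ¬ e.IsDiag) {q : ℕ} (hq : 3 ≤ q)
    (hqodd : Odd q)
    (hreg : ∀ v, E.countP (v ∈ ·) = q) (hconn : (toSimpleGraph E).Preconnected)
    (hdisj : Pairwise (Disjoint on K)) (hcover : ∀ v, v ∉ S ↔ ∃ i, v ∈ K i)
    (hne : ∀ i, (K i).Nonempty)
    (hclosed : ∀ i, ∀ a ∈ K i, ∀ b, (toSimpleGraph E).Adj a b → b ∈ K i ∨ b ∈ S) :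
    (q * (3 * q - 5) : ℤ) * #{i | Odd #(K i)} ≤
      (q - 1) * (q - 2) * Fintype.card V + q * (3 * q - 5) * #S + 2 * (q - 1) := by
  have hdeg (A : Finset V) : q * #A = 2 * numInnerEdges E A + numBoundaryEdges E A := by
    rw [← sum_countP_mem_eq hE, sum_congr rfl fun v _ => hreg v, sum_const, smul_eq_mul, mul_comm]
  have hsingle (A : Finset V) (hA : #A = 1) : numInnerEdges E A = 0 := by
    obtain ⟨v, rfl⟩ := card_eq_one.mp hA
    refine Multiset.countP_eq_zero.mpr fun e he hev => hE e he ?_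
    induction e using Sym2.ind with
    | _ a b => simp_all
  have hparts := sum_le_sum fun i (_ : i ∈ univ) =>
    mul_ite_odd_le hq hqodd (hdeg (K i)) (hsingle (K i))
  simp only [← mul_sum, sum_add_distrib, sum_boole, sum_const, card_univ, nsmul_eq_mul] at hparts
  have hcard := sum_card_add_card hdisj hcover
  have hbdry := sum_numBoundaryEdges_le hE hdisj hcover hclosed
  have hS := hdeg S
  have hk := card_add_card_le_countP_add_one hconn hdisj hcover hne hclosed
  rw [countP_exists_mem_eq] at hk
  have hq' : (3 : ℤ) ≤ q := by exact_mod_cast hq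
  zify at hcard hbdry hS hk
  -- after substituting `q|S| = 2e(S) + ∂S`, `e(S)` has the coefficient `10 - 6q ≤ 0`
  nlinarith [mul_le_mul_of_nonneg_left hbdry (by linarith : (0 : ℤ) ≤ 2 * (q - 2)),
    mul_le_mul_of_nonneg_left hk (by linarith : (0 : ℤ) ≤ 2 * (q - 1)),
    mul_nonneg (by linarith : (0 : ℤ) ≤ 6 * q - 10)
      (Nat.cast_nonneg (α := ℤ) (numInnerEdges E S)),
    congrArg (((4 : ℤ) * q - 6) * ·) hS, congrArg (((q : ℤ) - 1) * (q - 2) * ·) hcard]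

end Parts

end Counting

theorem mul_numOddComponentsDeleteVerts_le [Fintype V] [DecidableEq V] {E : Multiset (Sym2 V)}
    (hE : ∀ e ∈ E, ¬ e.IsDiag) {q : ℕ} (hq : 3 ≤ q) (hqodd : Odd q)
    (hreg : ∀ v, E.countP (v ∈ ·) = q) (hconn : (toSimpleGraph E).Preconnected) (u : Set V) :
    (q * (3 * q - 5) : ℤ) * (toSimpleGraph E).numOddComponentsDeleteVerts u ≤
      (q - 1) * (q - 2) * Fintype.card V + q * (3 * q - 5) * u.ncard + 2 * (q - 1) := by
  classical
  let G' := (⊤ : (toSimpleGraph E).Subgraph).deleteVerts u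
  have hodd : #{c : G'.coe.ConnectedComponent | Odd #(Subgraph.componentFinset c)} =
      (toSimpleGraph E).numOddComponentsDeleteVerts u := by
    simp only [Subgraph.card_componentFinset]
    rw [SimpleGraph.numOddComponentsDeleteVerts, Set.ncard_eq_toFinset_card']
    congr
    ext
    simp
  have := mul_card_odd_parts_le (S := u.toFinset) (K := Subgraph.componentFinset (G' := G'))
    hE hq hqodd hreg hconn
    Subgraph.pairwise_disjoint_componentFinset (fun v => ?_) Subgraph.componentFinset_nonempty
    (fun c a ha b hab => ?_)
  · rwa [hodd, ← Set.ncard_eq_toFinset_card'] at this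
  · rw [Set.mem_toFinset]
    refine ⟨fun hv => Subgraph.exists_mem_componentFinset (by simpa [G'] using hv), ?_⟩
    rintro ⟨c, hc⟩
    exact (Subgraph.mem_verts_of_mem_componentFinset hc).2
  · rw [Set.mem_toFinset, or_iff_not_imp_right]
    intro hb
    have hau : a ∉ u := (Subgraph.mem_verts_of_mem_componentFinset ha).2
    exact Subgraph.mem_componentFinset_of_adj ha (by simpa [G'] using hb)
      (by simpa [G', hau, hb] using hab)

variable {m : ℕ} {E : Multiset (Sym2 (Fin m))}

lemma preconnected_toSimpleGraph (hconn : Multigraph.Connected E) :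
    (toSimpleGraph E).Preconnected := fun u v =>
  (reachable_iff_reflTransGen u v).mpr <| Relation.ReflTransGen.mono
    (fun _ _ ⟨_, he, ha, hb, hab⟩ =>
      toSimpleGraph_adj.mpr ⟨(Sym2.mem_and_mem_iff hab).mp ⟨ha, hb⟩ ▸ he, hab⟩)
    _ _ (hconn u v)

lemma exists_isMatching_two_mul_card_eq {M : (toSimpleGraph E).Subgraph} (hM : M.IsMatching) :
    ∃ F : Finset (Sym2 (Fin m)), Multigraph.IsMatching E F ∧ M.verts.ncard = 2 * #F := by
  refine ⟨(Set.toFinite M.edgeSet).toFinset,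
    ⟨fun e he => ?_, fun e he f hf hef v ⟨hve, hvf⟩ => ?_⟩,
    by rw [hM.ncard_verts, Set.ncard_eq_toFinset_card _ (Set.toFinite _)]⟩
  · rw [Set.Finite.mem_toFinset] at he
    have := M.edgeSet_subset he
    simp only [toSimpleGraph, edgeSet_fromEdgeSet] at this
    exact this.1
  · rw [Set.Finite.mem_toFinset] at he hf
    obtain ⟨w, rfl⟩ := Sym2.mem_iff_exists.mp hve
    obtain ⟨w', rfl⟩ := Sym2.mem_iff_exists.mp hvf
    rw [Subgraph.mem_edgeSet] at he hf
    exact hef (by rw [hM.eq_of_adj_left he hf])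

end Multigraph

theorem matching_number_lower_bound_odd_general (q m : ℕ) (hq : 3 ≤ q) (hqodd : Odd q)
    (E : Multiset (Sym2 (Fin m)))
    (hloop : Multigraph.Loopless E) (hconn : Multigraph.Connected E)
    (hreg : ∀ v : Fin m, Multigraph.degree E v = q) :
    ∃ M : Finset (Sym2 (Fin m)), Multigraph.IsMatching E M ∧
      ⌈(((q : ℚ)^2 - q - 1) * m - (q - 1)) / (q * (3 * q - 5))⌉ ≤ (M.card : ℤ) := by
  obtain ⟨M, u, hM, hberge⟩ := (Multigraph.toSimpleGraph E).tutte_berge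
  obtain ⟨F, hF, hFcard⟩ := Multigraph.exists_isMatching_two_mul_card_eq hM
  have hodd := Multigraph.mul_numOddComponentsDeleteVerts_le hloop hq hqodd hreg
    (Multigraph.preconnected_toSimpleGraph hconn) u
  refine ⟨F, hF, Int.ceil_le.mpr ?_⟩
  rw [Nat.card_eq_fintype_card, Fintype.card_fin] at hberge
  rw [Fintype.card_fin] at hodd
  have hpos : (0 : ℤ) < q * (3 * q - 5) := by
    have : (3 : ℤ) ≤ q := by exact_mod_cast hq
    nlinarith
  have hberge' : (m : ℤ) + u.ncard ≤
      2 * #F + (Multigraph.toSimpleGraph E).numOddComponentsDeleteVerts u := by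
    exact_mod_cast hFcard ▸ hberge
  have hkey : ((q : ℤ) ^ 2 - q - 1) * m - (q - 1) ≤ #F * (q * (3 * q - 5)) := by
    nlinarith [mul_le_mul_of_nonneg_left hberge' hpos.le]
  rw [div_le_iff₀ (by exact_mod_cast hpos)]
  exact_mod_cast hkey

/-- For a `q`-regular connected loopless multigraph on `m ≥ 3` vertices with `q ≥ 3` odd,
the matching number is at least `⌈((q²−q−1)m−(q−1))/(q(3q−5))⌉`. -/
theorem matching_number_lower_bound_odd (q m : ℕ) (hq : 3 ≤ q) (hqodd : Odd q)
    (hm : 3 ≤ m) (E : Multiset (Sym2 (Fin m)))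
    (hloop : Multigraph.Loopless E) (hconn : Multigraph.Connected E)
    (hreg : ∀ v : Fin m, Multigraph.degree E v = q) :
    ∃ M : Finset (Sym2 (Fin m)), Multigraph.IsMatching E M ∧
      ⌈(((q : ℚ)^2 - q - 1) * m - (q - 1)) / (q * (3 * q - 5))⌉ ≤ (M.card : ℤ) :=
  matching_number_lower_bound_odd_general q m hq hqodd E hloop hconn hreg
end

section
/- For n ≥ 2, one has 2∫₀¹∫₀^s (min(1/t, 1/s, n) − 1)² dt ds = 2 log n − 2(1 − 1/n). -/
/-!
On the triangle `0 < t ≤ s` we have `1 / s ≤ 1 / t`, so the integrand does not depend on `t`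
and the inner integral is `s * (min (1 / s) n - 1) ^ 2`. This equals `s * (n - 1) ^ 2` for
`s ≤ 1 / n` and `1 / s - 2 + s` for `s ≥ 1 / n`, and both pieces integrate in closed form.
-/

open MeasureTheory Set Real intervalIntegral

theorem setIntegral_Ioc_min_one_div_sub_one_sq {s : ℝ} (hs : 0 ≤ s) (c : ℝ) :
    ∫ t in Ioc 0 s, (min (1 / t) (min (1 / s) c) - 1) ^ 2 = s * (min (1 / s) c - 1) ^ 2 := by
  have hconst : EqOn (fun t => (min (1 / t) (min (1 / s) c) - 1) ^ 2)
      (fun _ => (min (1 / s) c - 1) ^ 2) (Ioc 0 s) := fun t ht => by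
    have hst : 1 / s ≤ 1 / t := one_div_le_one_div_of_le ht.1 ht.2
    simp only [min_eq_right ((min_le_left _ _).trans hst)]
  rw [setIntegral_congr_fun measurableSet_Ioc hconst, setIntegral_const, Real.volume_real_Ioc,
    sub_zero, max_eq_left hs, smul_eq_mul]

theorem mul_min_one_div_sub_one_sq_of_le_one_div {n s : ℝ} (hn : 0 < n) (hs : 0 ≤ s)
    (hsn : s ≤ 1 / n) : s * (min (1 / s) n - 1) ^ 2 = s * (n - 1) ^ 2 := by
  rcases hs.eq_or_lt with rfl | hs
  · simp
  · rw [min_eq_right ((le_one_div hn hs).2 hsn)]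

theorem mul_min_one_div_sub_one_sq_of_one_div_le {n s : ℝ} (hn : 0 < n) (hsn : 1 / n ≤ s) :
    s * (min (1 / s) n - 1) ^ 2 = 1 / s - 2 + s := by
  have hs : 0 < s := (one_div_pos.2 hn).trans_le hsn
  rw [min_eq_left ((one_div_le hs hn).2 hsn)]
  field_simp
  ring

theorem intervalIntegrable_one_div_sub_two_add_id {a b : ℝ} (h0 : (0 : ℝ) ∉ uIcc a b) :
    IntervalIntegrable (fun s => 1 / s - 2 + s) volume a b :=
  ContinuousOn.intervalIntegrable (by fun_prop (disch := exact fun x hx h => h0 (h ▸ hx)))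

theorem integral_one_div_sub_two_add_id {a b : ℝ} (h0 : (0 : ℝ) ∉ uIcc a b) :
    ∫ s in a..b, (1 / s - 2 + s) = log (b / a) - 2 * (b - a) + (b ^ 2 - a ^ 2) / 2 := by
  have hinv : IntervalIntegrable (fun s : ℝ => 1 / s) volume a b :=
    intervalIntegrable_one_div (fun x hx h => h0 (h ▸ hx)) continuousOn_id
  rw [integral_add (hinv.sub intervalIntegrable_const) intervalIntegral.intervalIntegrable_id,
    integral_sub hinv intervalIntegrable_const, integral_one_div h0,
    intervalIntegral.integral_const, integral_id, smul_eq_mul]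
  ring

theorem integral_mul_min_one_div_sub_one_sq {n : ℝ} (hn : 1 ≤ n) :
    ∫ s in 0..1, s * (min (1 / s) n - 1) ^ 2 = log n - (1 - 1 / n) := by
  have hn0 : 0 < n := zero_lt_one.trans_le hn
  have hinv0 : 0 < 1 / n := one_div_pos.2 hn0
  have hinv1 : 1 / n ≤ 1 := (div_le_one hn0).2 hn
  have h0 : (0 : ℝ) ∉ uIcc (1 / n) 1 := by
    rw [uIcc_of_le hinv1]
    exact fun h => h.1.not_gt hinv0
  have hlow : EqOn (fun s => s * (min (1 / s) n - 1) ^ 2) (fun s => s * (n - 1) ^ 2)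
      (uIcc 0 (1 / n)) := fun s hs => by
    rw [uIcc_of_le hinv0.le] at hs
    exact mul_min_one_div_sub_one_sq_of_le_one_div hn0 hs.1 hs.2
  have hhigh : EqOn (fun s => s * (min (1 / s) n - 1) ^ 2) (fun s => 1 / s - 2 + s)
      (uIcc (1 / n) 1) := fun s hs => by
    rw [uIcc_of_le hinv1] at hs
    exact mul_min_one_div_sub_one_sq_of_one_div_le hn0 hs.1
  rw [← integral_add_adjacent_intervals (b := 1 / n), integral_congr hlow, integral_congr hhigh,
    intervalIntegral.integral_mul_const, integral_id, integral_one_div_sub_two_add_id h0,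
    one_div_one_div]
  · field_simp
    ring
  · exact (intervalIntegrable_congr (hlow.mono uIoc_subset_uIcc)).2
      (intervalIntegral.intervalIntegrable_id.mul_const _)
  · exact (intervalIntegrable_congr (hhigh.mono uIoc_subset_uIcc)).2
      (intervalIntegrable_one_div_sub_two_add_id h0)

/-- For `n ≥ 2`, `2∫₀¹∫₀^s (min(1/t, 1/s, n) − 1)² dt ds = 2 log n − 2(1 − 1/n)`. -/
theorem double_integral_min_formula (n : ℝ) (hn : 2 ≤ n) :
    2 * ∫ s in Set.Ioc (0 : ℝ) 1, ∫ t in Set.Ioc (0 : ℝ) s,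
        (min (1 / t) (min (1 / s) n) - 1) ^ 2
      = 2 * Real.log n - 2 * (1 - 1 / n) := by
  rw [setIntegral_congr_fun measurableSet_Ioc
      fun s hs => setIntegral_Ioc_min_one_div_sub_one_sq hs.1.le n,
    ← integral_of_le zero_le_one, integral_mul_min_one_div_sub_one_sq (by linarith)]
  ring
end

section
/- Let q ≥ 2 and m ≥ 3 with qm even, and let Π(q[m]) denote the set of pair partitions σ of {1,…,qm} such that each block meets each of the m consecutive intervals J_i = {(i−1)q+1,…,iq} at most once, every block has size exactly 2, and the associated q-regular multigraph on vertex set {1,…,m} (with an edge {i,j} for each block meeting J_i and J_j) is connected. Then |Π(q[m])| ≤ (m!)^{q/2} (q^{q/2})^m. -/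
/-!
Forgetting the interval and connectivity conditions, `Π(q[m])` injects into the set of all
fixed-point-free involutions of a set of size `n = qm`. Choosing the partner of one point and
recursing on the remaining `n - 2` points shows there are at most `(n - 1)‼` of these, and
`((n - 1)‼)² ≤ n!`. Finally `(qm)! = (m!)^q` times a multinomial coefficient, which the
multinomial theorem bounds by `q^{qm}`; taking square roots gives the claim.
-/

open Equiv Nat

namespace Nat

lemma doubleFactorial_le_doubleFactorial_succ (n : ℕ) : n‼ ≤ (n + 1)‼ := by
  induction n using Nat.twoStepInduction with
  | zero => decide
  | one => decide
  | more n ih _ =>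
    rw [doubleFactorial_add_two, doubleFactorial_add_two (n + 1)]
    exact Nat.mul_le_mul (by omega) ih

lemma sq_doubleFactorial_pred_le_factorial : ∀ n : ℕ, ((n - 1)‼) ^ 2 ≤ n !
  | 0 => le_rfl
  | n + 1 => by
    rw [factorial_eq_mul_doubleFactorial, sq, Nat.add_sub_cancel, mul_comm]
    exact Nat.mul_le_mul_right _ (doubleFactorial_le_doubleFactorial_succ n)

lemma factorial_mul_le_factorial_pow_mul_pow (q m : ℕ) : (q * m)! ≤ m ! ^ q * q ^ (q * m) := by
  classical
  have hspec := multinomial_spec (Finset.univ : Finset (Fin q)) fun _ => m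
  have hterm : multinomial Finset.univ (fun _ : Fin q => m) ≤ q ^ (q * m) := by
    have hpow := Finset.sum_pow_eq_sum_piAntidiag (Finset.univ : Finset (Fin q))
      (fun _ => (1 : ℕ)) (q * m)
    simp only [Finset.sum_const, Finset.card_univ, Fintype.card_fin, smul_eq_mul, mul_one,
      one_pow, Finset.prod_const_one] at hpow
    rw [hpow]
    exact Finset.single_le_sum (f := fun k => multinomial Finset.univ k)
      (fun _ _ => Nat.zero_le _)
      (Finset.mem_piAntidiag.2 ⟨by simp, fun i _ => Finset.mem_univ i⟩)
  simp only [Finset.prod_const, Finset.card_univ, Fintype.card_fin, Finset.sum_const,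
    smul_eq_mul] at hspec
  rw [← hspec]
  exact Nat.mul_le_mul_left _ hterm

end Nat

lemma Real.rpow_natCast_div_two_sq {x : ℝ} (hx : 0 ≤ x) (n : ℕ) :
    (x ^ ((n : ℝ) / 2)) ^ 2 = x ^ n := by
  rw [← Real.rpow_mul_natCast hx, ← Real.rpow_natCast]
  norm_num

lemma Nat.card_subtype_ne_and_ne {α : Type*} [Finite α] {a b : α} (hab : a ≠ b) {n : ℕ}
    (h : Nat.card α = n + 2) : Nat.card {x // x ≠ a ∧ x ≠ b} = n := by
  classical
  have := Fintype.ofFinite α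
  have hfilter : Finset.univ.filter (fun x => x ≠ a ∧ x ≠ b) = Finset.univ \ {a, b} := by
    ext; simp
  rw [Nat.card_eq_fintype_card] at h ⊢
  rw [Fintype.card_subtype, hfilter, Finset.card_sdiff_of_subset (Finset.subset_univ _),
    Finset.card_pair hab, Finset.card_univ, h, Nat.add_sub_cancel]

universe u

abbrev FixedPointFreeInvolution (α : Type u) : Type u :=
  {f : Perm α // (∀ x, f x ≠ x) ∧ ∀ x, f (f x) = x}

namespace FixedPointFreeInvolution

variable {α : Type u}

lemma card_subtype_le [Finite α] {P : Perm α → Prop} :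
    Nat.card {f : Perm α // (∀ x, f x ≠ x) ∧ (∀ x, f (f x) = x) ∧ P f} ≤
      Nat.card (FixedPointFreeInvolution α) :=
  Nat.card_le_card_of_injective (fun F => ⟨F.1, F.2.1, F.2.2.1⟩)
    fun _ _ h => Subtype.ext (congrArg (fun F : FixedPointFreeInvolution α => F.1) h)

lemma card_le_one [Finite α] (hα : Nat.card α ≤ 1) :
    Nat.card (FixedPointFreeInvolution α) ≤ 1 := by
  have : Subsingleton α := Finite.card_le_one_iff_subsingleton.mp hα
  exact Finite.card_le_one_iff_subsingleton.mpr inferInstance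

lemma apply_eq_iff_eq_apply (F : FixedPointFreeInvolution α) {x y : α} :
    F.1 x = y ↔ x = F.1 y :=
  ⟨fun h => h ▸ (F.2.2 x).symm, fun h => h ▸ F.2.2 y⟩

def restrict (F : FixedPointFreeInvolution α) {a b : α} (hab : F.1 a = b) :
    FixedPointFreeInvolution {x // x ≠ a ∧ x ≠ b} :=
  ⟨F.1.subtypePerm fun x => by
      rw [← hab, Ne, Ne, Ne, Ne, apply_eq_iff_eq_apply, F.1.injective.eq_iff, and_comm],
    fun x h => F.2.1 x (congrArg Subtype.val h),
    fun x => Subtype.ext (F.2.2 x)⟩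

lemma card_fiber_le [Finite α] (a b : α) :
    Nat.card {F : FixedPointFreeInvolution α // F.1 a = b} ≤
      Nat.card (FixedPointFreeInvolution {x // x ≠ a ∧ x ≠ b}) := by
  refine Nat.card_le_card_of_injective (fun F => F.1.restrict F.2) ?_
  rintro ⟨F, hF⟩ ⟨G, hG⟩ h
  refine Subtype.ext <| Subtype.ext <| Equiv.ext fun x => show F.1 x = G.1 x from ?_
  by_cases hxa : x = a
  · rw [hxa, hF, hG]
  by_cases hxb : x = b
  · rw [F.apply_eq_iff_eq_apply.2 (hxb.trans hF.symm),
      G.apply_eq_iff_eq_apply.2 (hxb.trans hG.symm)]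
  exact congrArg (fun H : FixedPointFreeInvolution _ => (H.1 ⟨x, hxa, hxb⟩).1) h

theorem card_le_doubleFactorial : ∀ (n : ℕ) (α : Type u) [Finite α], Nat.card α = n →
    Nat.card (FixedPointFreeInvolution α) ≤ (n - 1)‼
  | 0, _, _, hα | 1, _, _, hα => card_le_one (by omega)
  | n + 2, α, _, hα => by
    classical
    have := Fintype.ofFinite α
    obtain ⟨a⟩ : Nonempty α := (Nat.card_pos_iff.mp (by omega)).1
    let partner : FixedPointFreeInvolution α → {b // b ≠ a} := fun F => ⟨F.1 a, F.2.1 a⟩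
    have hfiber (b : {b // b ≠ a}) : Nat.card {F // partner F = b} ≤ (n - 1)‼ := by
      rw [Nat.card_congr (Equiv.subtypeEquivRight fun F => Subtype.ext_iff)]
      exact (card_fiber_le a b.1).trans
        (card_le_doubleFactorial n _ (Nat.card_subtype_ne_and_ne (Ne.symm b.2) hα))
    have hpartners : Nat.card {b // b ≠ a} = n + 1 := by
      rw [Nat.card_eq_fintype_card, Fintype.card_subtype_compl, Fintype.card_subtype_eq,
        ← Nat.card_eq_fintype_card, hα]; rfl
    calc Nat.card (FixedPointFreeInvolution α)
        = ∑ b : {b // b ≠ a}, Nat.card {F // partner F = b} := by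
          rw [← Nat.card_sigma, Nat.card_congr (Equiv.sigmaFiberEquiv partner)]
      _ ≤ ∑ _b : {b // b ≠ a}, (n - 1)‼ := Finset.sum_le_sum fun b _ => hfiber b
      _ = (n + 2 - 1)‼ := by
          rw [Finset.sum_const, Finset.card_univ, ← Nat.card_eq_fintype_card, hpartners,
            smul_eq_mul, ← doubleFactorial_add_one]; rfl

end FixedPointFreeInvolution

theorem pair_partition_count_bound_general (q m : ℕ) :
    (Nat.card {f : Equiv.Perm (Fin (q * m)) //
        (∀ x, f x ≠ x) ∧ (∀ x, f (f x) = x) ∧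
        (∀ x : Fin (q * m), (x : ℕ) / q ≠ ((f x : Fin (q * m)) : ℕ) / q) ∧
        (∀ M₁ M₂ : Finset (Fin m), M₁.Nonempty → M₂.Nonempty → M₁ ∪ M₂ = Finset.univ →
          ∃ x : Fin (q * m),
            (⟨(x : ℕ) / q, Nat.div_lt_of_lt_mul x.isLt⟩ : Fin m) ∈ M₁ ∧
            (⟨((f x : Fin (q * m)) : ℕ) / q,
              Nat.div_lt_of_lt_mul (f x).isLt⟩ : Fin m) ∈ M₂)} : ℝ)
      ≤ (Nat.factorial m : ℝ) ^ ((q : ℝ) / 2) * ((q : ℝ) ^ ((q : ℝ) / 2)) ^ m := by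
  refine (pow_le_pow_iff_left₀ (Nat.cast_nonneg _) (by positivity) two_ne_zero).1 ?_
  rw [mul_pow, ← pow_mul, mul_comm m 2, pow_mul, Real.rpow_natCast_div_two_sq (Nat.cast_nonneg _),
    Real.rpow_natCast_div_two_sq (Nat.cast_nonneg _), ← pow_mul]
  have hcount := FixedPointFreeInvolution.card_le_doubleFactorial (q * m) _ (Nat.card_fin _)
  exact_mod_cast
    (Nat.pow_le_pow_left (FixedPointFreeInvolution.card_subtype_le.trans hcount) 2).trans <|
    (sq_doubleFactorial_pred_le_factorial _).trans (factorial_mul_le_factorial_pow_mul_pow q m)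

/-- The set `Π(q[m])` of pair partitions of `{1,…,qm}` such that every block has size two,
meets each interval `J_i = {(i−1)q+1,…,iq}` at most once, and whose associated
`q`-regular multigraph on `{1,…,m}` is connected, is modeled by fixed-point-free
involutions `f` of `Fin (q*m)` pairing elements of distinct intervals (block containing
`x` is `{x, f x}`; `x` lies in interval `x/q`), with the stated connectivity condition.
Its cardinality is at most `(m!)^{q/2} (q^{q/2})^m`. -/
theorem pair_partition_count_bound (q m : ℕ) (hq : 2 ≤ q) (hm : 3 ≤ m)
    (heven : Even (q * m)) :
    (Nat.card {f : Equiv.Perm (Fin (q * m)) //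
        (∀ x, f x ≠ x) ∧ (∀ x, f (f x) = x) ∧
        (∀ x : Fin (q * m), (x : ℕ) / q ≠ ((f x : Fin (q * m)) : ℕ) / q) ∧
        (∀ M₁ M₂ : Finset (Fin m), M₁.Nonempty → M₂.Nonempty → M₁ ∪ M₂ = Finset.univ →
          ∃ x : Fin (q * m),
            (⟨(x : ℕ) / q, Nat.div_lt_of_lt_mul x.isLt⟩ : Fin m) ∈ M₁ ∧
            (⟨((f x : Fin (q * m)) : ℕ) / q,
              Nat.div_lt_of_lt_mul (f x).isLt⟩ : Fin m) ∈ M₂)} : ℝ)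
      ≤ (Nat.factorial m : ℝ) ^ ((q : ℝ) / 2) * ((q : ℝ) ^ ((q : ℝ) / 2)) ^ m :=
  pair_partition_count_bound_general q m
end
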